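/- Let w = e^{z*} where z*(x) = log((1+|x|²/8)^{-2}). Then ∫_{ℝ²} |∇w|² dx - ∫_{ℝ²} e^{z*} w² dx = -4π/5; in particular the infimum λ₁* of the Rayleigh functional over the L²-unit sphere of H¹(ℝ²) is negative. -/

import Mathlib

/-! With `u = 1 + ‖x‖² / 8` one has `e^{z*} = u⁻²`, and since `‖x‖² / 4 = 2 (u - 1)` the gradient
satisfies `‖∇e^{z*}‖² = ‖x‖² u⁻⁶ / 4 = 2 u⁻⁵ - 2 u⁻⁶`. So every integral involved is a combination of
`∫_{ℝ²} u^{-(k+1)} = 8π / k`, which polar coordinates reduce to the primitive `-(4 / k) u^{-k}` of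
`r u^{-(k+1)}`. This gives `∫ ‖∇w‖² = 4π/5`, `∫ e^{z*} w² = 8π/5` and `∫ w² = 8π/3`, so `w / ‖w‖₂`
has Rayleigh quotient `-3/10`; the Rayleigh values are bounded below by `-1` because `e^{z*} ≤ 1`. -/

open Real MeasureTheory

noncomputable def zstar (x : EuclideanSpace ℝ (Fin 2)) : ℝ :=
  Real.log ((1 + ‖x‖ ^ 2 / 8) ^ (-2 : ℤ))

/-- Values of the Rayleigh functional on the `L²`-unit sphere of `H¹(ℝ²)`. -/
noncomputable def rayleighValues : Set ℝ :=
  {r : ℝ | ∃ w : EuclideanSpace ℝ (Fin 2) → ℝ, MemLp w 2 volume ∧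
    Integrable (fun x => ‖fderiv ℝ w x‖ ^ 2) volume ∧
    (∫ x : EuclideanSpace ℝ (Fin 2), (w x) ^ 2) = 1 ∧
    r = (∫ x : EuclideanSpace ℝ (Fin 2), ‖fderiv ℝ w x‖ ^ 2) -
      ∫ x : EuclideanSpace ℝ (Fin 2), Real.exp (zstar x) * (w x) ^ 2}

open Set Filter

section RadialIntegrals

variable {c : ℝ} {k : ℕ}

lemma tendsto_inv_one_add_sq_div_pow_atTop (hc : 0 < c) (hk : k ≠ 0) :
    Tendsto (fun r : ℝ => ((1 + r ^ 2 / c) ^ k)⁻¹) atTop (nhds 0) := by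
  refine (tendsto_pow_atTop hk).comp ?_ |>.inv_tendsto_atTop
  exact tendsto_atTop_add_const_left _ _ <|
    (tendsto_pow_atTop two_ne_zero).atTop_div_const hc

lemma hasDerivAt_neg_div_mul_inv_one_add_sq_div_pow (hc : 0 < c) (hk : k ≠ 0) (r : ℝ) :
    HasDerivAt (fun t : ℝ => -(c / (2 * k)) * ((1 + t ^ 2 / c) ^ k)⁻¹)
      (r * ((1 + r ^ 2 / c) ^ (k + 1))⁻¹) r := by
  have hu : 0 < 1 + r ^ 2 / c := by positivity
  have hu_pow := ((((hasDerivAt_id r).pow 2).div_const c).const_add 1).pow k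
  refine ((hu_pow.inv (pow_ne_zero _ hu.ne')).const_mul _).congr_deriv ?_
  obtain ⟨k, rfl⟩ := Nat.exists_eq_add_one_of_ne_zero hk
  simp only [Pi.pow_apply, id_eq, Nat.cast_ofNat, Nat.add_sub_cancel, Nat.cast_add, Nat.cast_one]
  field_simp
  ring

lemma integrableOn_Ioi_mul_inv_one_add_sq_div_pow (hc : 0 < c) (hk : k ≠ 0) :
    IntegrableOn (fun r : ℝ => r * ((1 + r ^ 2 / c) ^ (k + 1))⁻¹) (Ioi 0) :=
  integrableOn_Ioi_deriv_of_nonneg'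
    (fun r _ => hasDerivAt_neg_div_mul_inv_one_add_sq_div_pow hc hk r)
    (fun r (hr : 0 < r) => by positivity)
    ((tendsto_inv_one_add_sq_div_pow_atTop hc hk).const_mul _)

lemma integral_Ioi_mul_inv_one_add_sq_div_pow (hc : 0 < c) (hk : k ≠ 0) :
    ∫ r in Ioi (0 : ℝ), r * ((1 + r ^ 2 / c) ^ (k + 1))⁻¹ = c / (2 * k) := by
  rw [integral_Ioi_of_hasDerivAt_of_nonneg'
    (fun r _ => hasDerivAt_neg_div_mul_inv_one_add_sq_div_pow hc hk r)
    (fun r (hr : 0 < r) => by positivity)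
    ((tendsto_inv_one_add_sq_div_pow_atTop hc hk).const_mul (-(c / (2 * k))))]
  simp

lemma integral_fun_norm_two (f : ℝ → ℝ) :
    ∫ x : EuclideanSpace ℝ (Fin 2), f ‖x‖ = 2 * π * ∫ r in Ioi (0 : ℝ), r * f r := by
  rw [integral_fun_norm_addHaar volume f, finrank_euclideanSpace_fin, Measure.real,
    EuclideanSpace.volume_ball_fin_two]
  simp [mul_assoc, pi_nonneg]

lemma integrable_fun_norm_two_iff {f : ℝ → ℝ} :
    Integrable (fun x : EuclideanSpace ℝ (Fin 2) => f ‖x‖) ↔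
      IntegrableOn (fun r => r * f r) (Ioi 0) := by
  rw [integrable_fun_norm_addHaar volume, finrank_euclideanSpace_fin]
  simp

lemma integrable_inv_one_add_norm_sq_div_pow (hc : 0 < c) (hk : k ≠ 0) :
    Integrable fun x : EuclideanSpace ℝ (Fin 2) => ((1 + ‖x‖ ^ 2 / c) ^ (k + 1))⁻¹ :=
  integrable_fun_norm_two_iff.2 (integrableOn_Ioi_mul_inv_one_add_sq_div_pow hc hk)

lemma integral_inv_one_add_norm_sq_div_pow (hc : 0 < c) (hk : k ≠ 0) :
    ∫ x : EuclideanSpace ℝ (Fin 2), ((1 + ‖x‖ ^ 2 / c) ^ (k + 1))⁻¹ = π * c / k := by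
  rw [integral_fun_norm_two (fun r => ((1 + r ^ 2 / c) ^ (k + 1))⁻¹),
    integral_Ioi_mul_inv_one_add_sq_div_pow hc hk]
  have : (k : ℝ) ≠ 0 := by exact_mod_cast hk
  field_simp

end RadialIntegrals

lemma exp_zstar (x : EuclideanSpace ℝ (Fin 2)) :
    exp (zstar x) = ((1 + ‖x‖ ^ 2 / 8) ^ 2)⁻¹ := by
  rw [zstar, exp_log (by positivity), zpow_neg]
  norm_cast

lemma exp_zstar_pow (x : EuclideanSpace ℝ (Fin 2)) (n : ℕ) :
    exp (zstar x) ^ n = ((1 + ‖x‖ ^ 2 / 8) ^ (2 * n))⁻¹ := by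
  rw [exp_zstar, inv_pow, pow_mul]

lemma hasFDerivAt_exp_zstar (x : EuclideanSpace ℝ (Fin 2)) :
    HasFDerivAt (fun y => exp (zstar y))
      ((-(1 / 2) * ((1 + ‖x‖ ^ 2 / 8) ^ 3)⁻¹) • innerSL ℝ x) x := by
  have hu : 0 < 1 + ‖x‖ ^ 2 / 8 := by positivity
  have hnorm_sq : HasFDerivAt (fun y : EuclideanSpace ℝ (Fin 2) => ‖y‖ ^ 2)
      ((2 : ℕ) • innerSL ℝ x) x := (hasStrictFDerivAt_norm_sq x).hasFDerivAt
  have hprofile := ((((hasDerivAt_id (‖x‖ ^ 2)).div_const (8 : ℝ)).const_add 1).pow 2).inv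
    (pow_ne_zero 2 hu.ne')
  rw [funext exp_zstar]
  refine (hprofile.comp_hasFDerivAt x hnorm_sq).congr_fderiv ?_
  ext y
  simp only [FunLike.coe_smul, Pi.smul_apply, Pi.pow_apply, id_eq, innerSL_apply_apply,
    smul_eq_mul]
  field_simp
  ring

lemma sq_norm_fderiv_exp_zstar (x : EuclideanSpace ℝ (Fin 2)) :
    ‖fderiv ℝ (fun y => exp (zstar y)) x‖ ^ 2 =
      2 * ((1 + ‖x‖ ^ 2 / 8) ^ 5)⁻¹ - 2 * ((1 + ‖x‖ ^ 2 / 8) ^ 6)⁻¹ := by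
  have hu : 0 < 1 + ‖x‖ ^ 2 / 8 := by positivity
  rw [(hasFDerivAt_exp_zstar x).fderiv, norm_smul, innerSL_apply_norm, norm_mul, norm_neg,
    mul_pow, mul_pow, norm_inv, norm_pow, norm_of_nonneg hu.le]
  norm_num
  field_simp
  ring

lemma integrable_sq_norm_fderiv_exp_zstar :
    Integrable fun x : EuclideanSpace ℝ (Fin 2) => ‖fderiv ℝ (fun y => exp (zstar y)) x‖ ^ 2 := by
  have h5 := integrable_inv_one_add_norm_sq_div_pow (c := 8) (k := 4) (by norm_num) (by norm_num)
  have h6 := integrable_inv_one_add_norm_sq_div_pow (c := 8) (k := 5) (by norm_num) (by norm_num)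
  simp_rw [sq_norm_fderiv_exp_zstar]
  exact (h5.const_mul 2).sub (h6.const_mul 2)

lemma integral_sq_norm_fderiv_exp_zstar :
    ∫ x : EuclideanSpace ℝ (Fin 2), ‖fderiv ℝ (fun y => exp (zstar y)) x‖ ^ 2 = 4 * π / 5 := by
  have h5 := integrable_inv_one_add_norm_sq_div_pow (c := 8) (k := 4) (by norm_num) (by norm_num)
  have h6 := integrable_inv_one_add_norm_sq_div_pow (c := 8) (k := 5) (by norm_num) (by norm_num)
  simp_rw [sq_norm_fderiv_exp_zstar]
  rw [integral_sub (h5.const_mul 2) (h6.const_mul 2), integral_const_mul, integral_const_mul,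
    integral_inv_one_add_norm_sq_div_pow (k := 4) (by norm_num) (by norm_num),
    integral_inv_one_add_norm_sq_div_pow (k := 5) (by norm_num) (by norm_num)]
  ring

lemma integral_exp_zstar_mul_sq :
    ∫ x : EuclideanSpace ℝ (Fin 2), exp (zstar x) * exp (zstar x) ^ 2 = 8 * π / 5 := by
  simp_rw [← pow_succ', exp_zstar_pow]
  rw [integral_inv_one_add_norm_sq_div_pow (k := 5) (by norm_num) (by norm_num)]
  ring

lemma memLp_two_exp_zstar : MemLp (fun x : EuclideanSpace ℝ (Fin 2) => exp (zstar x)) 2 := by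
  have hdiff : Differentiable ℝ fun x : EuclideanSpace ℝ (Fin 2) => exp (zstar x) :=
    fun x => (hasFDerivAt_exp_zstar x).differentiableAt
  refine (memLp_two_iff_integrable_sq hdiff.continuous.aestronglyMeasurable).2 ?_
  simp_rw [exp_zstar_pow]
  exact integrable_inv_one_add_norm_sq_div_pow (k := 3) (by norm_num) (by norm_num)

lemma integral_exp_zstar_sq :
    ∫ x : EuclideanSpace ℝ (Fin 2), exp (zstar x) ^ 2 = 8 * π / 3 := by
  simp_rw [exp_zstar_pow]
  rw [integral_inv_one_add_norm_sq_div_pow (k := 3) (by norm_num) (by norm_num)]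
  ring

lemma neg_one_le_of_mem_rayleighValues {r : ℝ} (hr : r ∈ rayleighValues) : -1 ≤ r := by
  obtain ⟨w, hw, -, hnorm, rfl⟩ := hr
  have hexp_le_one (x : EuclideanSpace ℝ (Fin 2)) : exp (zstar x) ≤ 1 := by
    rw [exp_zstar]
    exact inv_le_one_of_one_le₀ (one_le_pow₀ (le_add_of_nonneg_right (by positivity)))
  have hpot : ∫ x, exp (zstar x) * w x ^ 2 ≤ ∫ x, w x ^ 2 :=
    integral_mono_of_nonneg (.of_forall fun x => by positivity) hw.integrable_sq
      (.of_forall fun x => mul_le_of_le_one_left (sq_nonneg _) (hexp_le_one x))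
  have hgrad : 0 ≤ ∫ x, ‖fderiv ℝ w x‖ ^ 2 := integral_nonneg fun x => by positivity
  linarith

lemma div_integral_sq_mem_rayleighValues {w : EuclideanSpace ℝ (Fin 2) → ℝ} (hw : MemLp w 2)
    (hgrad : Integrable fun x => ‖fderiv ℝ w x‖ ^ 2) (hpos : 0 < ∫ x, w x ^ 2) :
    ((∫ x, ‖fderiv ℝ w x‖ ^ 2) - ∫ x, exp (zstar x) * w x ^ 2) / ∫ x, w x ^ 2 ∈
      rayleighValues := by
  set c := (√(∫ x, w x ^ 2))⁻¹
  have hc_sq : c ^ 2 = (∫ x, w x ^ 2)⁻¹ := by rw [inv_pow, sq_sqrt hpos.le]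
  have hfderiv (x) : ‖fderiv ℝ (fun y => c * w y) x‖ ^ 2 = c ^ 2 * ‖fderiv ℝ w x‖ ^ 2 := by
    rw [show (fun y => c * w y) = c • w from rfl, fderiv_const_smul_field, Pi.smul_apply,
      norm_smul, mul_pow, norm_eq_abs, sq_abs]
  refine ⟨fun x => c * w x, hw.const_mul c, ?_, ?_, ?_⟩
  · simpa only [hfderiv] using hgrad.const_mul (c ^ 2)
  · simp_rw [mul_pow]
    rw [integral_const_mul, hc_sq, inv_mul_cancel₀ hpos.ne']
  · simp_rw [hfderiv, mul_pow, mul_left_comm (exp _)]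
    rw [integral_const_mul, integral_const_mul, hc_sq]
    ring

theorem rayleigh_of_exp_zstar_and_lambda_neg :
    ((∫ x : EuclideanSpace ℝ (Fin 2), ‖fderiv ℝ (fun y => Real.exp (zstar y)) x‖ ^ 2) -
      ∫ x : EuclideanSpace ℝ (Fin 2), Real.exp (zstar x) * (Real.exp (zstar x)) ^ 2
        = -(4 * π / 5)) ∧
    sInf rayleighValues < 0 := by
  have hrayleigh : (∫ x : EuclideanSpace ℝ (Fin 2), ‖fderiv ℝ (fun y => exp (zstar y)) x‖ ^ 2) -
      ∫ x : EuclideanSpace ℝ (Fin 2), exp (zstar x) * exp (zstar x) ^ 2 = -(4 * π / 5) := by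
    rw [integral_sq_norm_fderiv_exp_zstar, integral_exp_zstar_mul_sq]
    ring
  refine ⟨hrayleigh, ?_⟩
  have hmem := div_integral_sq_mem_rayleighValues memLp_two_exp_zstar
    integrable_sq_norm_fderiv_exp_zstar (by rw [integral_exp_zstar_sq]; positivity)
  rw [hrayleigh, integral_exp_zstar_sq] at hmem
  calc sInf rayleighValues ≤ -(4 * π / 5) / (8 * π / 3) :=
        csInf_le ⟨-1, fun r hr => neg_one_le_of_mem_rayleighValues hr⟩ hmem
    _ < 0 := div_neg_of_neg_of_pos (by linarith [pi_pos]) (by positivity)
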